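/- arXiv:2006.03694 — 5 statements merged into one kernel-verified Lean document; each statement's English description precedes it below -/
import Mathlib

section
/- Consider the constrained problem: minimize ||H p + g||^2 + phi^2 ||p||^2 subject to <p, g> <= -theta ||g||^2, where H is symmetric, phi > 0, theta > 0, and g is nonzero. Writing H_tilde = [H; phi I], g_tilde = (g; 0), if <H_tilde^dagger g_tilde, g> < theta ||g||^2, then the unique minimizer is p* = -H_tilde^dagger g_tilde - lambda * (H_tilde^T H_tilde)^{-1} g, where lambda = (-<H_tilde^dagger g_tilde, g> + theta ||g||^2) / <(H_tilde^T H_tilde)^{-1} g, g> > 0, and p* satisfies <p*, g> = -theta ||g||^2. -/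
open Matrix
open scoped RealInnerProductSpace

/-!
For a linear map `T`, expanding `f p = ‖T p + g‖² + φ²‖p‖²` around a point `c` gives
`f (c + v) = f c + 2 (⟪T v, T c + g⟫ + φ² ⟪v, c⟫) + ‖T v‖² + φ²‖v‖²`. The vector
`p* = -u - λ q` solves the normal equation `(T² + φ²) p* = -(T g + λ g)`, so for `T = H` symmetric
the linear term equals `-2 λ ⟪v, g⟫`, which is `≥ 0` for every feasible direction `v` because
`λ > 0` and `p*` lies on the boundary `⟪p, g⟫ = -θ‖g‖²`. The quadratic term is
`≥ φ²‖v‖² > 0` for `v ≠ 0`. Positivity of `λ` comes from `⟪q, g⟫ = ⟪q, (T² + φ²) q⟫ > 0`.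
-/

section RegularizedLeastSquares

variable {E F : Type*} [NormedAddCommGroup E] [InnerProductSpace ℝ E]
  [NormedAddCommGroup F] [InnerProductSpace ℝ F]

theorem regularizedResidual_add (T : E →ₗ[ℝ] F) (g : F) (φ : ℝ) (c v : E) :
    ‖T (c + v) + g‖ ^ 2 + φ ^ 2 * ‖c + v‖ ^ 2
      = (‖T c + g‖ ^ 2 + φ ^ 2 * ‖c‖ ^ 2) + 2 * (⟪T v, T c + g⟫ + φ ^ 2 * ⟪v, c⟫)
        + (‖T v‖ ^ 2 + φ ^ 2 * ‖v‖ ^ 2) := by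
  rw [map_add, add_right_comm, norm_add_sq_real (T c + g), norm_add_sq_real c,
    real_inner_comm (T v), real_inner_comm v]
  ring

theorem regularizedResidual_lt_of_kkt (T : E →ₗ[ℝ] F) (g : F) {φ lam : ℝ} {a c p : E}
    (hφ : φ ≠ 0) (hlam : 0 ≤ lam)
    (hkkt : ∀ v, ⟪T v, T c + g⟫ + φ ^ 2 * ⟪v, c⟫ = -(lam * ⟪v, a⟫))
    (hp : ⟪p, a⟫ ≤ ⟪c, a⟫) (hne : p ≠ c) :
    ‖T c + g‖ ^ 2 + φ ^ 2 * ‖c‖ ^ 2 < ‖T p + g‖ ^ 2 + φ ^ 2 * ‖p‖ ^ 2 := by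
  obtain ⟨v, rfl⟩ : ∃ v, p = c + v := ⟨p - c, by abel⟩
  have hv : v ≠ 0 := by rintro rfl; simp at hne
  have hva : ⟪v, a⟫ ≤ 0 := by rw [inner_add_left] at hp; linarith
  have hquad : 0 < φ ^ 2 * ‖v‖ ^ 2 := by positivity
  rw [regularizedResidual_add, hkkt]
  nlinarith [sq_nonneg ‖T v‖, mul_nonneg hlam (neg_nonneg.mpr hva)]

variable {T : E →ₗ[ℝ] E}

theorem LinearMap.IsSymmetric.kkt_of_normal_eq (hT : T.IsSymmetric) {g a c : E} {φ lam : ℝ}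
    (h : T (T c) + φ ^ 2 • c = -(T g + lam • a)) (v : E) :
    ⟪T v, T c + g⟫ + φ ^ 2 * ⟪v, c⟫ = -(lam * ⟪v, a⟫) := by
  have hv := congrArg (⟪v, ·⟫) h
  simp only [inner_add_right, inner_neg_right, real_inner_smul_right] at hv
  rw [inner_add_right, hT v (T c), hT v g]
  linarith

theorem LinearMap.IsSymmetric.inner_normal_pos (hT : T.IsSymmetric) {φ : ℝ} (hφ : φ ≠ 0)
    {x : E} (hx : x ≠ 0) : 0 < ⟪x, T (T x) + φ ^ 2 • x⟫ := by
  rw [inner_add_right, real_inner_smul_right, ← hT, real_inner_self_eq_norm_sq,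
    real_inner_self_eq_norm_sq]
  positivity

end RegularizedLeastSquares

section MatrixOperator

variable {n : Type*} [Fintype n] [DecidableEq n]

theorem Matrix.toEuclideanLin_sq_add_smul_one {𝕜 : Type*} [RCLike 𝕜] (H : Matrix n n 𝕜) (s : 𝕜)
    (x : EuclideanSpace 𝕜 n) :
    (H ^ 2 + s • 1).toEuclideanLin x = H.toEuclideanLin (H.toEuclideanLin x) + s • x := by
  simp [toLpLin_one, sq]

theorem Matrix.IsSymm.posDef_sq_add_smul_one {H : Matrix n n ℝ}
    (hH : H.IsSymm) {φ : ℝ} (hφ : φ ≠ 0) : (H ^ 2 + φ ^ 2 • 1).PosDef := by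
  refine PosDef.posSemidef_add ?_ (PosDef.one.smul (by positivity))
  simpa [sq, hH.eq] using posSemidef_self_mul_conjTranspose H

theorem Matrix.toEuclideanLin_apply_inv_apply {𝕜 : Type*} [RCLike 𝕜] {A : Matrix n n 𝕜}
    (hA : IsUnit A.det) (x : EuclideanSpace 𝕜 n) :
    A.toEuclideanLin (A⁻¹.toEuclideanLin x) = x := by
  simpa [toLpLin_one] using congrArg (fun M => M.toEuclideanLin x) (mul_nonsing_inv A hA)

end MatrixOperator

theorem constrained_least_squares_minimizer_general
    {d : ℕ} (H : Matrix (Fin d) (Fin d) ℝ) (φ θ : ℝ)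
    (hsymm : H.IsSymm) (hφ : 0 < φ)
    (g : EuclideanSpace ℝ (Fin d)) (hg : g ≠ 0)
    (A : Matrix (Fin d) (Fin d) ℝ)
    (hA : A = H ^ 2 + φ ^ 2 • (1 : Matrix (Fin d) (Fin d) ℝ))
    (u q : EuclideanSpace ℝ (Fin d))
    (hu : u = A⁻¹.toEuclideanLin (H.toEuclideanLin g))
    (hq : q = A⁻¹.toEuclideanLin g)
    (hcase : ⟪u, g⟫ < θ * ‖g‖ ^ 2)
    (lam : ℝ) (hlam : lam = (-⟪u, g⟫ + θ * ‖g‖ ^ 2) / ⟪q, g⟫) :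
    0 < lam
    ∧ ⟪-u - lam • q, g⟫ = -θ * ‖g‖ ^ 2
    ∧ (∀ p : EuclideanSpace ℝ (Fin d), ⟪p, g⟫ ≤ -θ * ‖g‖ ^ 2 →
        ‖H.toEuclideanLin (-u - lam • q) + g‖ ^ 2 + φ ^ 2 * ‖-u - lam • q‖ ^ 2
          ≤ ‖H.toEuclideanLin p + g‖ ^ 2 + φ ^ 2 * ‖p‖ ^ 2)
    ∧ (∀ p : EuclideanSpace ℝ (Fin d), ⟪p, g⟫ ≤ -θ * ‖g‖ ^ 2 → p ≠ -u - lam • q →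
        ‖H.toEuclideanLin (-u - lam • q) + g‖ ^ 2 + φ ^ 2 * ‖-u - lam • q‖ ^ 2
          < ‖H.toEuclideanLin p + g‖ ^ 2 + φ ^ 2 * ‖p‖ ^ 2) := by
  set T := H.toEuclideanLin
  have hT : T.IsSymmetric :=
    isSymmetric_toEuclideanLin_iff.mpr (isHermitian_iff_isSymm.mpr hsymm)
  have hdet : IsUnit A.det :=
    (isUnit_iff_isUnit_det A).mp (hA ▸ hsymm.posDef_sq_add_smul_one hφ.ne').isUnit
  have hnormal (x) : T (T (A⁻¹.toEuclideanLin x)) + φ ^ 2 • A⁻¹.toEuclideanLin x = x := by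
    rw [← toEuclideanLin_sq_add_smul_one, ← hA, toEuclideanLin_apply_inv_apply hdet]
  have hu' : T (T u) + φ ^ 2 • u = T g := hu ▸ hnormal _
  have hq' : T (T q) + φ ^ 2 • q = g := hq ▸ hnormal _
  have hq0 : q ≠ 0 := by
    rintro rfl
    exact hg (by simpa using hq'.symm)
  have hqg : 0 < ⟪q, g⟫ := hq' ▸ hT.inner_normal_pos hφ.ne' hq0
  have hlam_pos : 0 < lam := hlam ▸ div_pos (by linarith) hqg
  set c := -u - lam • q
  have hcg : ⟪c, g⟫ = -θ * ‖g‖ ^ 2 := by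
    rw [inner_sub_left, inner_neg_left, real_inner_smul_left, hlam,
      div_mul_cancel₀ _ hqg.ne']
    ring
  have hc : T (T c) + φ ^ 2 • c = -(T g + lam • g) := by
    simp only [c, map_sub, map_neg, map_smul]
    rw [← hu', ← hq']
    module
  have hmin : ∀ p, ⟪p, g⟫ ≤ -θ * ‖g‖ ^ 2 → p ≠ c →
      ‖T c + g‖ ^ 2 + φ ^ 2 * ‖c‖ ^ 2 < ‖T p + g‖ ^ 2 + φ ^ 2 * ‖p‖ ^ 2 :=
    fun p hp hne => regularizedResidual_lt_of_kkt T g hφ.ne' hlam_pos.le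
      (hT.kkt_of_normal_eq hc) (hcg ▸ hp) hne
  refine ⟨hlam_pos, hcg, fun p hp => ?_, hmin⟩
  rcases eq_or_ne p c with rfl | hne
  · exact le_rfl
  · exact (hmin p hp hne).le

/-- For `H` symmetric, `φ, θ > 0`, `g ≠ 0`, with `H̃ = [H; φI]`,
`g̃ = (g; 0)`, so `H̃†g̃ = (H² + φ²I)⁻¹ H g` and `H̃ᵀH̃ = H² + φ²I`: if
`⟪H̃†g̃, g⟫ < θ‖g‖²`, then `p* = -H̃†g̃ - λ (H̃ᵀH̃)⁻¹ g` with
`λ = (-⟪H̃†g̃, g⟫ + θ‖g‖²)/⟪(H̃ᵀH̃)⁻¹ g, g⟫ > 0` is the unique minimizer of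
`‖H p + g‖² + φ²‖p‖²` subject to `⟪p, g⟫ ≤ -θ‖g‖²`, and `⟪p*, g⟫ = -θ‖g‖²`. -/
theorem constrained_least_squares_minimizer
    {d : ℕ} (H : Matrix (Fin d) (Fin d) ℝ) (φ θ : ℝ)
    (hsymm : H.IsSymm) (hφ : 0 < φ) (hθ : 0 < θ)
    (g : EuclideanSpace ℝ (Fin d)) (hg : g ≠ 0)
    (A : Matrix (Fin d) (Fin d) ℝ)
    (hA : A = H ^ 2 + φ ^ 2 • (1 : Matrix (Fin d) (Fin d) ℝ))
    (u q : EuclideanSpace ℝ (Fin d))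
    (hu : u = A⁻¹.toEuclideanLin (H.toEuclideanLin g))
    (hq : q = A⁻¹.toEuclideanLin g)
    (hcase : ⟪u, g⟫ < θ * ‖g‖ ^ 2)
    (lam : ℝ) (hlam : lam = (-⟪u, g⟫ + θ * ‖g‖ ^ 2) / ⟪q, g⟫) :
    0 < lam
    ∧ ⟪-u - lam • q, g⟫ = -θ * ‖g‖ ^ 2
    ∧ (∀ p : EuclideanSpace ℝ (Fin d), ⟪p, g⟫ ≤ -θ * ‖g‖ ^ 2 →
        ‖H.toEuclideanLin (-u - lam • q) + g‖ ^ 2 + φ ^ 2 * ‖-u - lam • q‖ ^ 2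
          ≤ ‖H.toEuclideanLin p + g‖ ^ 2 + φ ^ 2 * ‖p‖ ^ 2)
    ∧ (∀ p : EuclideanSpace ℝ (Fin d), ⟪p, g⟫ ≤ -θ * ‖g‖ ^ 2 → p ≠ -u - lam • q →
        ‖H.toEuclideanLin (-u - lam • q) + g‖ ^ 2 + φ ^ 2 * ‖-u - lam • q‖ ^ 2
          < ‖H.toEuclideanLin p + g‖ ^ 2 + φ ^ 2 * ‖p‖ ^ 2) :=
  constrained_least_squares_minimizer_general H φ θ hsymm hφ g hg A hA u q hu hq hcase lam hlam
end

section
/- Let H_tilde = [H; phi I] with H symmetric, ||H|| <= L_i, phi > 0, and g_tilde = (g; 0). If v satisfies ||H_tilde^T H_tilde v - H g|| <= epsilon ||H g|| with 0 <= epsilon < 1, then ||v - H_tilde^dagger g_tilde|| <= epsilon * ((L_i^2 + phi^2)/phi^2) * ||H_tilde^dagger g_tilde||, and hence ||v|| <= (1/phi)(1 + epsilon (L_i^2 + phi^2)/phi^2) * ||g||. -/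
open Matrix
open scoped Matrix.Norms.L2Operator RealInnerProductSpace

/-!
The regularised normal operator `A = H² + φ²` is coercive, `φ² ‖x‖ ≤ ‖A x‖`, because
`⟪A x, x⟫ = ‖H x‖² + φ² ‖x‖²`, and bounded by `Lᵢ² + φ²`. A residual of relative size `ε`
therefore gives a relative error of at most `ε` times the condition bound `(Lᵢ² + φ²) / φ²`.
The same identity at the exact solution `u = A⁻¹ H g` gives `‖H u‖² + φ² ‖u‖² = ⟪g, H u⟫`,
whence `2 φ ‖u‖ ≤ ‖g‖`, and the bound on `‖v‖` follows from the triangle inequality.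
-/

theorem norm_sub_le_of_norm_apply_sub_le {E F 𝓕 : Type*} [SeminormedAddCommGroup E]
    [SeminormedAddCommGroup F] [FunLike 𝓕 E F] [AddMonoidHomClass 𝓕 E F] (A : 𝓕)
    {m M ε : ℝ} (hm : 0 < m) (hε : 0 ≤ ε) (hlow : ∀ x, m * ‖x‖ ≤ ‖A x‖)
    (hup : ∀ x, ‖A x‖ ≤ M * ‖x‖) {u v : E} (hres : ‖A v - A u‖ ≤ ε * ‖A u‖) :
    ‖v - u‖ ≤ ε * (M / m) * ‖u‖ := by
  have h : m * ‖v - u‖ ≤ m * (ε * (M / m) * ‖u‖) :=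
    calc m * ‖v - u‖ ≤ ‖A v - A u‖ := map_sub A v u ▸ hlow (v - u)
      _ ≤ ε * (M * ‖u‖) := hres.trans (mul_le_mul_of_nonneg_left (hup u) hε)
      _ = m * (ε * (M / m) * ‖u‖) := by field_simp
  exact le_of_mul_le_mul_left h hm

theorem Matrix.toEuclideanLin_apply_toEuclideanLin_nonsing_inv {n 𝕜 : Type*} [Fintype n]
    [DecidableEq n] [RCLike 𝕜] {A : Matrix n n 𝕜} (hA : IsUnit A.det) (x : EuclideanSpace 𝕜 n) :
    A.toEuclideanLin (A⁻¹.toEuclideanLin x) = x := by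
  rw [← LinearMap.comp_apply, ← toLpLin_mul_same, mul_nonsing_inv A hA, toLpLin_one,
    LinearMap.id_apply]

open scoped ComplexOrder in
theorem Matrix.IsHermitian.posDef_sq_add_smul_one {n 𝕜 : Type*} [Fintype n] [DecidableEq n]
    [RCLike 𝕜] {H : Matrix n n 𝕜} (hH : H.IsHermitian) {c : ℝ} (hc : 0 < c) :
    (H ^ 2 + c • (1 : Matrix n n 𝕜)).PosDef := by
  refine PosDef.posSemidef_add ?_ (PosDef.one.smul hc)
  simpa only [hH.eq, sq] using posSemidef_conjTranspose_mul_self H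

namespace LinearMap.IsSymmetric

variable {E : Type*} [NormedAddCommGroup E] [InnerProductSpace ℝ E] {T : E →ₗ[ℝ] E}

theorem inner_apply_apply_add_smul_self (hT : T.IsSymmetric) (c : ℝ) (x : E) :
    ⟪T (T x) + c • x, x⟫ = ‖T x‖ ^ 2 + c * ‖x‖ ^ 2 := by
  rw [inner_add_left, real_inner_smul_left, hT, real_inner_self_eq_norm_sq,
    real_inner_self_eq_norm_sq]

theorem mul_norm_le_norm_apply_apply_add_smul (hT : T.IsSymmetric) (c : ℝ) (x : E) :
    c * ‖x‖ ≤ ‖T (T x) + c • x‖ := by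
  rcases (norm_nonneg x).eq_or_lt with hx | hx
  · rw [← hx, mul_zero]
    exact norm_nonneg _
  refine le_of_mul_le_mul_right ?_ hx
  calc c * ‖x‖ * ‖x‖ ≤ ‖T x‖ ^ 2 + c * ‖x‖ ^ 2 := by nlinarith [sq_nonneg ‖T x‖]
    _ = ⟪T (T x) + c • x, x⟫ := (hT.inner_apply_apply_add_smul_self c x).symm
    _ ≤ ‖T (T x) + c • x‖ * ‖x‖ := real_inner_le_norm _ _

theorem two_mul_mul_norm_le_of_apply_apply_add_smul_eq (hT : T.IsSymmetric) {φ : ℝ} {u g : E}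
    (hu : T (T u) + φ ^ 2 • u = T g) : 2 * φ * ‖u‖ ≤ ‖g‖ := by
  have henergy : ‖T u‖ ^ 2 + φ ^ 2 * ‖u‖ ^ 2 ≤ ‖g‖ * ‖T u‖ := by
    rw [← hT.inner_apply_apply_add_smul_self, hu, hT]
    exact real_inner_le_norm _ _
  have hsq : (2 * φ * ‖u‖) ^ 2 ≤ ‖g‖ ^ 2 := by nlinarith [sq_nonneg (‖g‖ - 2 * ‖T u‖)]
  exact le_of_sq_le_sq hsq (norm_nonneg g)

end LinearMap.IsSymmetric

theorem norm_apply_apply_add_smul_le {E : Type*} [SeminormedAddCommGroup E] [NormedSpace ℝ E]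
    {T : E →ₗ[ℝ] E} {L c : ℝ} (hL0 : 0 ≤ L) (hL : ∀ x, ‖T x‖ ≤ L * ‖x‖) (hc : 0 ≤ c) (x : E) :
    ‖T (T x) + c • x‖ ≤ (L ^ 2 + c) * ‖x‖ :=
  calc ‖T (T x) + c • x‖ ≤ ‖T (T x)‖ + c * ‖x‖ := by
        simpa only [norm_smul, Real.norm_of_nonneg hc] using norm_add_le (T (T x)) (c • x)
    _ ≤ L * (L * ‖x‖) + c * ‖x‖ := by
        gcongr
        exact (hL _).trans (mul_le_mul_of_nonneg_left (hL x) hL0)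
    _ = (L ^ 2 + c) * ‖x‖ := by ring

theorem inexact_least_squares_solution_bounds_general
    {d : ℕ} (H : Matrix (Fin d) (Fin d) ℝ) (Li φ ε : ℝ)
    (hsymm : H.IsSymm) (hnorm : ‖H‖ ≤ Li) (hφ : 0 < φ)
    (hε0 : 0 ≤ ε)
    (g v : EuclideanSpace ℝ (Fin d))
    (A : Matrix (Fin d) (Fin d) ℝ)
    (hA : A = H ^ 2 + φ ^ 2 • (1 : Matrix (Fin d) (Fin d) ℝ))
    (hres : ‖A.toEuclideanLin v - H.toEuclideanLin g‖ ≤ ε * ‖H.toEuclideanLin g‖) :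
    ‖v - A⁻¹.toEuclideanLin (H.toEuclideanLin g)‖
      ≤ ε * ((Li ^ 2 + φ ^ 2) / φ ^ 2) * ‖A⁻¹.toEuclideanLin (H.toEuclideanLin g)‖
    ∧ ‖v‖ ≤ 1 / φ * (1 + ε * ((Li ^ 2 + φ ^ 2) / φ ^ 2)) * ‖g‖ := by
  have hH : H.IsHermitian := isHermitian_iff_isSelfAdjoint.mpr hsymm
  have hT : H.toEuclideanLin.IsSymmetric := isSymmetric_toEuclideanLin_iff.mpr hH
  have hAx : ∀ x, A.toEuclideanLin x = H.toEuclideanLin (H.toEuclideanLin x) + φ ^ 2 • x := by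
    simp [hA, sq]
  have hdet : IsUnit A.det :=
    (isUnit_iff_isUnit_det A).mp (hA ▸ hH.posDef_sq_add_smul_one (by positivity)).isUnit
  set u := A⁻¹.toEuclideanLin (H.toEuclideanLin g)
  have hAu : A.toEuclideanLin u = H.toEuclideanLin g :=
    toEuclideanLin_apply_toEuclideanLin_nonsing_inv hdet _
  have hLi : 0 ≤ Li := (norm_nonneg H).trans hnorm
  have hHL : ∀ y, ‖H.toEuclideanLin y‖ ≤ Li * ‖y‖ := fun y ↦
    (H.l2_opNorm_mulVec y).trans (mul_le_mul_of_nonneg_right hnorm (norm_nonneg y))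
  have hlow : ∀ x, φ ^ 2 * ‖x‖ ≤ ‖A.toEuclideanLin x‖ := fun x ↦ by
    rw [hAx]
    exact hT.mul_norm_le_norm_apply_apply_add_smul _ x
  have hup : ∀ x, ‖A.toEuclideanLin x‖ ≤ (Li ^ 2 + φ ^ 2) * ‖x‖ := fun x ↦ by
    rw [hAx]
    exact norm_apply_apply_add_smul_le hLi hHL (by positivity) x
  have herr : ‖v - u‖ ≤ ε * ((Li ^ 2 + φ ^ 2) / φ ^ 2) * ‖u‖ :=
    norm_sub_le_of_norm_apply_sub_le A.toEuclideanLin (by positivity) hε0 hlow hup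
      (by rwa [hAu])
  have hu : ‖u‖ ≤ 1 / φ * ‖g‖ := by
    rw [hAx] at hAu
    have := hT.two_mul_mul_norm_le_of_apply_apply_add_smul_eq hAu
    rw [one_div_mul_eq_div, le_div_iff₀ hφ]
    nlinarith [norm_nonneg u]
  refine ⟨herr, ?_⟩
  calc ‖v‖ ≤ ‖v - u‖ + ‖u‖ := norm_le_norm_sub_add v u
    _ ≤ (1 + ε * ((Li ^ 2 + φ ^ 2) / φ ^ 2)) * ‖u‖ := by linarith
    _ ≤ (1 + ε * ((Li ^ 2 + φ ^ 2) / φ ^ 2)) * (1 / φ * ‖g‖) := by gcongr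
    _ = 1 / φ * (1 + ε * ((Li ^ 2 + φ ^ 2) / φ ^ 2)) * ‖g‖ := by ring

/-- With `H̃ = [H; φI]`, `H` symmetric, `‖H‖ ≤ Lᵢ`, `φ > 0`,
`g̃ = (g; 0)`, and `H̃†g̃ = (H² + φ²I)⁻¹ H g`: if `v` satisfies
`‖H̃ᵀH̃ v - H g‖ ≤ ε ‖H g‖` with `0 ≤ ε < 1`, then
`‖v - H̃†g̃‖ ≤ ε ((Lᵢ² + φ²)/φ²) ‖H̃†g̃‖` and
`‖v‖ ≤ (1/φ)(1 + ε (Lᵢ² + φ²)/φ²) ‖g‖`. -/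
theorem inexact_least_squares_solution_bounds
    {d : ℕ} (H : Matrix (Fin d) (Fin d) ℝ) (Li φ ε : ℝ)
    (hsymm : H.IsSymm) (hnorm : ‖H‖ ≤ Li) (hφ : 0 < φ)
    (hε0 : 0 ≤ ε) (hε1 : ε < 1)
    (g v : EuclideanSpace ℝ (Fin d))
    (A : Matrix (Fin d) (Fin d) ℝ)
    (hA : A = H ^ 2 + φ ^ 2 • (1 : Matrix (Fin d) (Fin d) ℝ))
    (hres : ‖A.toEuclideanLin v - H.toEuclideanLin g‖ ≤ ε * ‖H.toEuclideanLin g‖) :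
    ‖v - A⁻¹.toEuclideanLin (H.toEuclideanLin g)‖
      ≤ ε * ((Li ^ 2 + φ ^ 2) / φ ^ 2) * ‖A⁻¹.toEuclideanLin (H.toEuclideanLin g)‖
    ∧ ‖v‖ ≤ 1 / φ * (1 + ε * ((Li ^ 2 + φ ^ 2) / φ ^ 2)) * ‖g‖ :=
  inexact_least_squares_solution_bounds_general H Li φ ε hsymm hnorm hφ hε0 g v A hA hres
end

section
/- Under the hypotheses of the DINO update, each local update direction p_i (whether p_i = -v_i^{(1)} or the corrected p_i = -v_i^{(1)} - lambda_i v_i^{(2)}) satisfies ||p_i|| <= a_i ||g|| where a_i = (1/phi)(1 + epsilon_i^{(1)} (L_i^2 + phi^2)/phi^2) + b_i and b_i = ((1 + epsilon_i^{(2)} (L_i^2+phi^2)/phi^2)/(1 - epsilon_i^{(2)} sqrt((L_i^2+phi^2)/phi^2))) * ((1/phi)(1 + epsilon_i^{(1)} (L_i^2+phi^2)/phi^2) + theta) * sqrt((L_i^2+phi^2)/phi^2), with b_i omitted when p_i = -v_i^{(1)}. -/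
open Matrix
open scoped Matrix.Norms.L2Operator RealInnerProductSpace

/-!
Work in the energy norm `x ↦ ‖H̃ x‖` of `S = H² + φ² = H̃ᵀ H̃`, which lies between `φ ‖x‖` and
`√(L² + φ²) ‖x‖`. If `S x = u + r`, then `‖H̃ x‖² = ⟪x, u⟫ + ⟪x, r⟫`, and both terms are at most
`‖H̃ x‖` times `‖f‖` (when `u = H f`), `‖H̃ y‖` (when `u = S y`) or `‖r‖ / φ`; this bounds `‖v₁‖`.
For the correction, let `S y = g` and `s = ‖H̃ y‖ ≥ ‖g‖ / √(L² + φ²)`. Writing `σ` for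
`√((L² + φ²) / φ²)`, the residual of `v₂` is at most `ε₂ σ s / φ` in energy norm, so
`⟪v₂, g⟫ ≥ (1 - ε₂ σ) s²` and `φ ‖v₂‖ ≤ (1 + ε₂ σ) s`, which bounds `λ ‖v₂‖`.
-/

lemma le_of_sq_le_mul {a c : ℝ} (hc : 0 ≤ c) (h : a ^ 2 ≤ a * c) : a ≤ c := by
  nlinarith

namespace Tikhonov

variable {E : Type*} [NormedAddCommGroup E] [InnerProductSpace ℝ E] (T : E →ₗ[ℝ] E) (φ : ℝ)

/-- With `T = H`, `augment T φ` is the stacked operator `H̃ = [H; φ I]` and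
`normalOp T φ = H² + φ² I` is `H̃ᵀ H̃` (see `inner_augment`). -/
def normalOp : E →ₗ[ℝ] E := T ∘ₗ T + φ ^ 2 • LinearMap.id

def augment (x : E) : WithLp 2 (E × E) := WithLp.toLp 2 (T x, φ • x)

variable {T φ}

@[simp]
lemma normalOp_apply (x : E) : normalOp T φ x = T (T x) + φ ^ 2 • x := rfl

lemma norm_augment_sq (x : E) : ‖augment T φ x‖ ^ 2 = ‖T x‖ ^ 2 + φ ^ 2 * ‖x‖ ^ 2 := by
  rw [augment, WithLp.prod_norm_sq_eq_of_L2]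
  simp only [WithLp.toLp_fst, WithLp.toLp_snd, norm_smul, Real.norm_eq_abs, mul_pow, sq_abs]

lemma inner_augment (hT : T.IsSymmetric) (x y : E) :
    ⟪augment T φ x, augment T φ y⟫ = ⟪x, normalOp T φ y⟫ := by
  simp only [augment, WithLp.prod_inner_apply, normalOp_apply, inner_add_right,
    real_inner_smul_left, real_inner_smul_right, hT x]
  ring

lemma norm_augment_sq_eq_inner (hT : T.IsSymmetric) (x : E) :
    ‖augment T φ x‖ ^ 2 = ⟪x, normalOp T φ x⟫ := by
  rw [← inner_augment hT, real_inner_self_eq_norm_sq]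

lemma norm_apply_le_norm_augment (x : E) : ‖T x‖ ≤ ‖augment T φ x‖ :=
  le_of_sq_le_sq (by rw [norm_augment_sq]; nlinarith [sq_nonneg φ, sq_nonneg ‖x‖]) (norm_nonneg _)

lemma mul_norm_le_norm_augment (x : E) : φ * ‖x‖ ≤ ‖augment T φ x‖ :=
  le_of_sq_le_sq (by rw [norm_augment_sq, mul_pow]; nlinarith [sq_nonneg ‖T x‖]) (norm_nonneg _)

lemma norm_augment_le {L : ℝ} (hTL : ∀ x, ‖T x‖ ≤ L * ‖x‖) (x : E) :
    ‖augment T φ x‖ ≤ √(L ^ 2 + φ ^ 2) * ‖x‖ := by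
  refine le_of_sq_le_sq ?_ (by positivity)
  rw [norm_augment_sq, mul_pow, Real.sq_sqrt (by positivity)]
  nlinarith [pow_le_pow_left₀ (norm_nonneg _) (hTL x) 2]

lemma inner_apply_le_norm_augment_mul (hT : T.IsSymmetric) (x f : E) :
    ⟪x, T f⟫ ≤ ‖augment T φ x‖ * ‖f‖ := by
  rw [← hT]
  exact (real_inner_le_norm _ _).trans
    (mul_le_mul_of_nonneg_right (norm_apply_le_norm_augment x) (norm_nonneg _))

lemma inner_normalOp_le_norm_augment_mul (hT : T.IsSymmetric) (x y : E) :
    ⟪x, normalOp T φ y⟫ ≤ ‖augment T φ x‖ * ‖augment T φ y‖ := by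
  rw [← inner_augment hT]
  exact real_inner_le_norm _ _

lemma abs_inner_le_norm_augment_mul (hφ : 0 < φ) (x r : E) :
    |⟪x, r⟫| ≤ ‖augment T φ x‖ * (‖r‖ / φ) := by
  rw [mul_div_assoc', le_div_iff₀ hφ]
  calc |⟪x, r⟫| * φ ≤ ‖x‖ * ‖r‖ * φ :=
        mul_le_mul_of_nonneg_right (abs_real_inner_le_norm x r) hφ.le
    _ = φ * ‖x‖ * ‖r‖ := by ring
    _ ≤ ‖augment T φ x‖ * ‖r‖ :=
        mul_le_mul_of_nonneg_right (mul_norm_le_norm_augment x) (norm_nonneg r)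

lemma norm_augment_le_of_normalOp_eq_add (hT : T.IsSymmetric) (hφ : 0 < φ) {x u r : E} {c : ℝ}
    (hc : 0 ≤ c) (hu : ⟪x, u⟫ ≤ ‖augment T φ x‖ * c) (hx : normalOp T φ x = u + r) :
    ‖augment T φ x‖ ≤ c + ‖r‖ / φ := by
  have hr := (abs_le.mp (abs_inner_le_norm_augment_mul (T := T) hφ x r)).2
  have hsq : ‖augment T φ x‖ ^ 2 ≤ ‖augment T φ x‖ * (c + ‖r‖ / φ) := by
    rw [norm_augment_sq_eq_inner hT, hx, inner_add_right]
    linarith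
  exact le_of_sq_le_mul (by positivity) hsq

lemma norm_normalOp_le_mul_norm_augment (hT : T.IsSymmetric) {L : ℝ}
    (hTL : ∀ x, ‖T x‖ ≤ L * ‖x‖) (y : E) :
    ‖normalOp T φ y‖ ≤ √(L ^ 2 + φ ^ 2) * ‖augment T φ y‖ := by
  have h := (inner_normalOp_le_norm_augment_mul hT (normalOp T φ y) y).trans
    (mul_le_mul_of_nonneg_right (norm_augment_le (φ := φ) hTL (normalOp T φ y)) (norm_nonneg _))
  rw [real_inner_self_eq_norm_sq, mul_right_comm] at h
  exact le_of_sq_le_mul (by positivity) (by linarith)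

lemma sq_norm_augment_sub_le_inner (hT : T.IsSymmetric) (hφ : 0 < φ) {x y r : E}
    (hx : normalOp T φ x = normalOp T φ y + r) :
    ‖augment T φ y‖ ^ 2 - ‖r‖ / φ * ‖augment T φ y‖ ≤ ⟪x, normalOp T φ y⟫ := by
  have hry := (abs_le.mp (abs_inner_le_norm_augment_mul (T := T) hφ y r)).1
  have hsym : ⟪x, normalOp T φ y⟫ = ⟪normalOp T φ x, y⟫ := by
    rw [← inner_augment hT, real_inner_comm, inner_augment hT, real_inner_comm]
  rw [hsym, hx, inner_add_left, real_inner_comm, ← norm_augment_sq_eq_inner hT, real_inner_comm]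
  linarith

lemma normalOp_surjective [FiniteDimensional ℝ E] (hT : T.IsSymmetric) (hφ : 0 < φ) :
    Function.Surjective (normalOp T φ) := by
  refine LinearMap.injective_iff_surjective.mp ((injective_iff_map_eq_zero _).mpr fun x hx => ?_)
  have h : ‖augment T φ x‖ = 0 := by
    rw [← sq_eq_zero_iff, norm_augment_sq_eq_inner hT, hx, inner_zero_right]
  have := mul_norm_le_norm_augment (T := T) (φ := φ) x
  rw [h] at this
  exact norm_le_zero_iff.mp (nonpos_of_mul_nonpos_right this hφ)

variable {L ε : ℝ}

theorem norm_le_of_norm_normalOp_sub_apply_le (hT : T.IsSymmetric) (hφ : 0 < φ)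
    (hTL : ∀ x, ‖T x‖ ≤ L * ‖x‖) (hε : 0 ≤ ε) {x g : E}
    (hres : ‖normalOp T φ x - T g‖ ≤ ε * ‖T g‖) :
    ‖x‖ ≤ 1 / φ * (1 + ε * ((L ^ 2 + φ ^ 2) / φ ^ 2)) * ‖g‖ := by
  have hJ : ‖augment T φ x‖ ≤ ‖g‖ + ‖normalOp T φ x - T g‖ / φ :=
    norm_augment_le_of_normalOp_eq_add hT hφ (norm_nonneg g)
      (inner_apply_le_norm_augment_mul hT x g) (by abel)
  have hr : ‖normalOp T φ x - T g‖ ≤ ε * L * ‖g‖ := by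
    rw [mul_assoc]; exact hres.trans (mul_le_mul_of_nonneg_left (hTL g) hε)
  have hx : φ * ‖x‖ ≤ ‖g‖ + ε * L * ‖g‖ / φ :=
    (mul_norm_le_norm_augment x).trans (hJ.trans (by gcongr))
  have hL : L / φ ≤ (L ^ 2 + φ ^ 2) / φ ^ 2 := by
    rw [div_le_div_iff₀ hφ (by positivity)]
    nlinarith [sq_nonneg (L - φ), sq_nonneg φ]
  rw [← le_div_iff₀' hφ] at hx
  calc ‖x‖ ≤ (‖g‖ + ε * L * ‖g‖ / φ) / φ := hx
    _ = 1 / φ * (1 + ε * (L / φ)) * ‖g‖ := by ring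
    _ ≤ 1 / φ * (1 + ε * ((L ^ 2 + φ ^ 2) / φ ^ 2)) * ‖g‖ := by gcongr

theorem norm_mul_norm_le_inner_of_norm_normalOp_sub_le [FiniteDimensional ℝ E]
    (hT : T.IsSymmetric) (hφ : 0 < φ) (hTL : ∀ x, ‖T x‖ ≤ L * ‖x‖) (hε : 0 ≤ ε)
    (hεL : ε < √(φ ^ 2 / (L ^ 2 + φ ^ 2))) {x g : E} (hres : ‖normalOp T φ x - g‖ ≤ ε * ‖g‖) :
    ‖x‖ * ‖g‖ ≤ (1 + ε * ((L ^ 2 + φ ^ 2) / φ ^ 2)) / (1 - ε * √((L ^ 2 + φ ^ 2) / φ ^ 2))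
      * √((L ^ 2 + φ ^ 2) / φ ^ 2) * ⟪x, g⟫ := by
  obtain ⟨y, rfl⟩ := normalOp_surjective hT hφ g
  set κ := (L ^ 2 + φ ^ 2) / φ ^ 2 with hκ
  set σ := √κ with hσ
  set s := ‖augment T φ y‖
  set r := normalOp T φ x - normalOp T φ y
  set t := ‖r‖ / φ
  have hxr : normalOp T φ x = normalOp T φ y + r := (add_sub_cancel _ _).symm
  have hσφ : √(L ^ 2 + φ ^ 2) = φ * σ := by
    rw [hσ, hκ, Real.sqrt_div' _ (sq_nonneg φ), Real.sqrt_sq hφ.le]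
    field_simp
  have hκ1 : 1 ≤ κ := by
    rw [hκ, le_div_iff₀ (by positivity)]
    nlinarith [sq_nonneg L]
  have hσ1 : 1 ≤ σ := Real.one_le_sqrt.mpr hκ1
  have hεσ : ε * σ < 1 := by
    rw [← inv_div, Real.sqrt_inv, ← hκ, ← hσ] at hεL
    exact (mul_lt_mul_of_pos_right hεL (by positivity)).trans_eq (inv_mul_cancel₀ (by positivity))
  have hσκ : σ ≤ κ := by
    nlinarith [Real.sq_sqrt (zero_le_one.trans hκ1)]
  have hg : ‖normalOp T φ y‖ ≤ φ * σ * s := hσφ ▸ norm_normalOp_le_mul_norm_augment hT hTL y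
  have ht : t ≤ ε * σ * s := by
    rw [div_le_iff₀ hφ]
    nlinarith [mul_le_mul_of_nonneg_left hg hε]
  have hinner : s ^ 2 - t * s ≤ ⟪x, normalOp T φ y⟫ := sq_norm_augment_sub_le_inner hT hφ hxr
  have hx : ‖x‖ ≤ (1 + ε * σ) * s / φ := by
    rw [le_div_iff₀' hφ]
    calc φ * ‖x‖ ≤ ‖augment T φ x‖ := mul_norm_le_norm_augment x
      _ ≤ s + t := norm_augment_le_of_normalOp_eq_add hT hφ (norm_nonneg _)
          (inner_normalOp_le_norm_augment_mul hT x y) hxr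
      _ ≤ (1 + ε * σ) * s := by linarith
  rw [div_mul_eq_mul_div, div_mul_eq_mul_div, le_div_iff₀ (sub_pos.mpr hεσ)]
  calc ‖x‖ * ‖normalOp T φ y‖ * (1 - ε * σ)
      ≤ (1 + ε * σ) * s / φ * (φ * σ * s) * (1 - ε * σ) := by gcongr
    _ = (1 + ε * σ) * σ * ((1 - ε * σ) * s ^ 2) := by field_simp
    _ ≤ (1 + ε * σ) * σ * ⟪x, normalOp T φ y⟫ := by gcongr; nlinarith [norm_nonneg (augment T φ y)]
    _ ≤ (1 + ε * κ) * σ * ⟪x, normalOp T φ y⟫ := by gcongr; nlinarith [norm_nonneg (augment T φ y)]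

end Tikhonov

section
variable {E : Type*} [NormedAddCommGroup E] [InnerProductSpace ℝ E]

theorem norm_neg_sub_smul_le {x₁ x₂ g : E} {a K θ : ℝ} (h₁ : ‖x₁‖ ≤ a * ‖g‖)
    (h₂ : ‖x₂‖ * ‖g‖ ≤ K * ⟪x₂, g⟫) (hpos : 0 < ⟪x₂, g⟫) (hcase : ⟪x₁, g⟫ < θ * ‖g‖ ^ 2) :
    ‖-x₁ - ((-⟪x₁, g⟫ + θ * ‖g‖ ^ 2) / ⟪x₂, g⟫) • x₂‖ ≤ (a + K * (a + θ)) * ‖g‖ := by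
  set lam := (-⟪x₁, g⟫ + θ * ‖g‖ ^ 2) / ⟪x₂, g⟫ with hlam
  have hg : 0 < ‖g‖ := norm_pos_iff.mpr (by rintro rfl; simp at hpos)
  have hlam0 : 0 ≤ lam := div_nonneg (by linarith) hpos.le
  have hK : 0 ≤ K := nonneg_of_mul_nonneg_left ((by positivity : (0 : ℝ) ≤ _).trans h₂) hpos
  have hnum : -⟪x₁, g⟫ + θ * ‖g‖ ^ 2 ≤ (a + θ) * ‖g‖ ^ 2 := by
    nlinarith [neg_le_of_abs_le (abs_real_inner_le_norm x₁ g)]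
  have hlam : lam * ‖x₂‖ ≤ K * (a + θ) * ‖g‖ := by
    refine le_of_mul_le_mul_right ?_ hg
    calc lam * ‖x₂‖ * ‖g‖ = lam * (‖x₂‖ * ‖g‖) := mul_assoc _ _ _
      _ ≤ lam * (K * ⟪x₂, g⟫) := by gcongr
      _ = K * (-⟪x₁, g⟫ + θ * ‖g‖ ^ 2) := by rw [hlam]; field_simp
      _ ≤ K * ((a + θ) * ‖g‖ ^ 2) := by gcongr
      _ = K * (a + θ) * ‖g‖ * ‖g‖ := by ring
  calc ‖-x₁ - lam • x₂‖ ≤ ‖x₁‖ + lam * ‖x₂‖ := by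
        have := norm_sub_le (-x₁) (lam • x₂)
        rwa [norm_neg, norm_smul, Real.norm_eq_abs, abs_of_nonneg hlam0] at this
    _ ≤ (a + K * (a + θ)) * ‖g‖ := by linarith

end

lemma Matrix.toEuclideanLin_sq_add_smul_one_s12 {n : Type*} [Fintype n] [DecidableEq n]
    (H : Matrix n n ℝ) (φ : ℝ) :
    toEuclideanLin (H ^ 2 + φ ^ 2 • 1) = Tikhonov.normalOp (toEuclideanLin H) φ := by
  rw [map_add, map_smul, sq, toEuclideanLin_eq_toLin_orthonormal,
    toLin_mul _ (EuclideanSpace.basisFun n ℝ).toBasis, toLin_one]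
  rfl

theorem local_update_direction_bound_general
    {d : ℕ} (H : Matrix (Fin d) (Fin d) ℝ) (Li φ θ ε₁ ε₂ : ℝ)
    (hsymm : H.IsSymm) (hnorm : ‖H‖ ≤ Li) (hφ : 0 < φ)
    (hε₁0 : 0 ≤ ε₁) (hε₂0 : 0 ≤ ε₂)
    (hε₂ : ε₂ < Real.sqrt (φ ^ 2 / (Li ^ 2 + φ ^ 2)))
    (g v₁ v₂ : EuclideanSpace ℝ (Fin d))
    (A : Matrix (Fin d) (Fin d) ℝ)
    (hA : A = H ^ 2 + φ ^ 2 • (1 : Matrix (Fin d) (Fin d) ℝ))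
    (hres₁ : ‖A.toEuclideanLin v₁ - H.toEuclideanLin g‖ ≤ ε₁ * ‖H.toEuclideanLin g‖)
    (hres₂ : ‖A.toEuclideanLin v₂ - g‖ ≤ ε₂ * ‖g‖)
    (hpos : 0 < ⟪v₂, g⟫)
    (lam b : ℝ)
    (hlam : lam = (-⟪v₁, g⟫ + θ * ‖g‖ ^ 2) / ⟪v₂, g⟫)
    (hb : b = (1 + ε₂ * ((Li ^ 2 + φ ^ 2) / φ ^ 2))
        / (1 - ε₂ * Real.sqrt ((Li ^ 2 + φ ^ 2) / φ ^ 2))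
        * (1 / φ * (1 + ε₁ * ((Li ^ 2 + φ ^ 2) / φ ^ 2)) + θ)
        * Real.sqrt ((Li ^ 2 + φ ^ 2) / φ ^ 2)) :
    ‖-v₁‖ ≤ 1 / φ * (1 + ε₁ * ((Li ^ 2 + φ ^ 2) / φ ^ 2)) * ‖g‖
    ∧ (⟪v₁, g⟫ < θ * ‖g‖ ^ 2 →
        ‖-v₁ - lam • v₂‖
          ≤ (1 / φ * (1 + ε₁ * ((Li ^ 2 + φ ^ 2) / φ ^ 2)) + b) * ‖g‖) := by
  have hT : (toEuclideanLin H).IsSymmetric :=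
    isSymmetric_toEuclideanLin_iff.mpr (isHermitian_iff_isSymm.mpr hsymm)
  have hTL (x : EuclideanSpace ℝ (Fin d)) : ‖toEuclideanLin H x‖ ≤ Li * ‖x‖ :=
    (l2_opNorm_mulVec H x).trans (by gcongr)
  rw [hA, toEuclideanLin_sq_add_smul_one_s12] at hres₁ hres₂
  have hv₁ := Tikhonov.norm_le_of_norm_normalOp_sub_apply_le hT hφ hTL hε₁0 hres₁
  refine ⟨by rwa [norm_neg], fun hcase => ?_⟩
  have hv₂ := Tikhonov.norm_mul_norm_le_inner_of_norm_normalOp_sub_le hT hφ hTL hε₂0 hε₂ hres₂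
  rw [hlam, hb]
  convert norm_neg_sub_smul_le hv₁ hv₂ hpos hcase using 2
  ring

/-- Each local DINO update direction `pᵢ` (whether `pᵢ = -vᵢ⁽¹⁾` or the
corrected `pᵢ = -vᵢ⁽¹⁾ - λᵢ vᵢ⁽²⁾`) satisfies `‖pᵢ‖ ≤ aᵢ ‖g‖`, where
`aᵢ = (1/φ)(1 + εᵢ⁽¹⁾(Lᵢ²+φ²)/φ²) + bᵢ` with `bᵢ` as in the theorem (and `bᵢ` omitted
in the uncorrected case). -/
theorem local_update_direction_bound
    {d : ℕ} (H : Matrix (Fin d) (Fin d) ℝ) (Li φ θ ε₁ ε₂ : ℝ)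
    (hsymm : H.IsSymm) (hnorm : ‖H‖ ≤ Li) (hφ : 0 < φ) (hθ : 0 < θ)
    (hε₁0 : 0 ≤ ε₁) (hε₁1 : ε₁ < 1) (hε₂0 : 0 ≤ ε₂)
    (hε₂ : ε₂ < Real.sqrt (φ ^ 2 / (Li ^ 2 + φ ^ 2)))
    (g v₁ v₂ : EuclideanSpace ℝ (Fin d)) (hg : g ≠ 0)
    (A : Matrix (Fin d) (Fin d) ℝ)
    (hA : A = H ^ 2 + φ ^ 2 • (1 : Matrix (Fin d) (Fin d) ℝ))
    (hres₁ : ‖A.toEuclideanLin v₁ - H.toEuclideanLin g‖ ≤ ε₁ * ‖H.toEuclideanLin g‖)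
    (hres₂ : ‖A.toEuclideanLin v₂ - g‖ ≤ ε₂ * ‖g‖)
    (hpos : 0 < ⟪v₂, g⟫)
    (lam b : ℝ)
    (hlam : lam = (-⟪v₁, g⟫ + θ * ‖g‖ ^ 2) / ⟪v₂, g⟫)
    (hb : b = (1 + ε₂ * ((Li ^ 2 + φ ^ 2) / φ ^ 2))
        / (1 - ε₂ * Real.sqrt ((Li ^ 2 + φ ^ 2) / φ ^ 2))
        * (1 / φ * (1 + ε₁ * ((Li ^ 2 + φ ^ 2) / φ ^ 2)) + θ)
        * Real.sqrt ((Li ^ 2 + φ ^ 2) / φ ^ 2)) :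
    ‖-v₁‖ ≤ 1 / φ * (1 + ε₁ * ((Li ^ 2 + φ ^ 2) / φ ^ 2)) * ‖g‖
    ∧ (⟪v₁, g⟫ < θ * ‖g‖ ^ 2 →
        ‖-v₁ - lam • v₂‖
          ≤ (1 / φ * (1 + ε₁ * ((Li ^ 2 + φ ^ 2) / φ ^ 2)) + b) * ‖g‖) :=
  local_update_direction_bound_general H Li φ θ ε₁ ε₂ hsymm hnorm hφ hε₁0 hε₂0 hε₂ g v₁ v₂ A hA
    hres₁ hres₂ hpos lam b hlam hb
end

section
/- Contraction factor bound: suppose f has L-Lipschitz gradient, is bounded below by f*, and satisfies the PL inequality with constant mu > 0. If for every w with g = grad f(w) != 0 there is a direction p with <p, g> <= -theta ||g||^2 and ||p|| <= a ||g|| (theta, a > 0), then theta <= sqrt(2 L a^2 / mu), and consequently for tau = 2(1-rho)theta/(L a^2) with rho in (0,1), one has 0 <= 1 - tau*rho*mu*theta < 1. -/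
open scoped RealInnerProductSpace

/-!
Running one gradient step of length `1/L` from a point with nonzero gradient `g` decreases `f`
by at least `‖g‖²/(2L)` (descent lemma), while the PL inequality caps the total possible
decrease `f w - f*` by `‖g‖²/μ`; hence `μ ≤ 2L`. Cauchy–Schwarz applied to the direction `p`
gives `θ‖g‖² ≤ ‖p‖‖g‖ ≤ a‖g‖²`, i.e. `θ ≤ a`. Together `θ²μ ≤ 2La²`, which is the first claim,
and since `ρ(1 - ρ) ≤ 1/4` the factor `τρμθ = 2ρ(1 - ρ)·θ²μ/(La²)` lies in `(0, 1]`.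
-/

section Descent

variable {E : Type*} [NormedAddCommGroup E] [InnerProductSpace ℝ E] [CompleteSpace E]
  {f : E → ℝ} {L : ℝ}

theorem hasDerivAt_comp_add_smul (hf : Differentiable ℝ f) (x v : E) (t : ℝ) :
    HasDerivAt (fun s : ℝ => f (x + s • v)) ⟪gradient f (x + t • v), v⟫ t := by
  have hline : HasDerivAt (fun s : ℝ => x + s • v) v t := by
    simpa using ((hasDerivAt_id t).smul_const v).const_add x
  simpa [Function.comp_def] using
    (hf (x + t • v)).hasGradientAt.hasFDerivAt.comp_hasDerivAt t hline

theorem le_add_inner_gradient_add_sq_norm (hf : Differentiable ℝ f)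
    (hlip : ∀ x y, ‖gradient f x - gradient f y‖ ≤ L * ‖x - y‖) (x v : E) :
    f (x + v) ≤ f x + ⟪gradient f x, v⟫ + L / 2 * ‖v‖ ^ 2 := by
  -- The gap between the quadratic upper model and `f` along `t ↦ x + t • v` is nondecreasing
  -- on `t ≥ 0`, because the Lipschitz bound controls its derivative.
  set ψ : ℝ → ℝ := fun t => f x + t * ⟪gradient f x, v⟫ + L / 2 * t ^ 2 * ‖v‖ ^ 2
    - f (x + t • v)
  set ψ' : ℝ → ℝ := fun t => ⟪gradient f x, v⟫ + L * t * ‖v‖ ^ 2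
    - ⟪gradient f (x + t • v), v⟫
  have hψ : ∀ t, HasDerivAt ψ (ψ' t) t := fun t => by
    have := ((((hasDerivAt_id t).mul_const ⟪gradient f x, v⟫).const_add (f x)).add
      (((hasDerivAt_pow 2 t).const_mul (L / 2)).mul_const (‖v‖ ^ 2))).sub
      (hasDerivAt_comp_add_smul hf x v t)
    exact this.congr_deriv (by simp only [ψ']; ring)
  have hψ'_nonneg : ∀ t ∈ interior (Set.Ici (0 : ℝ)), 0 ≤ ψ' t := by
    rw [interior_Ici]
    intro t (ht : 0 < t)
    suffices ⟪gradient f (x + t • v), v⟫ - ⟪gradient f x, v⟫ ≤ L * t * ‖v‖ ^ 2 by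
      simp only [ψ']; linarith
    have hgrad : ‖gradient f (x + t • v) - gradient f x‖ ≤ L * (t * ‖v‖) := by
      simpa [norm_smul, abs_of_pos ht] using hlip (x + t • v) x
    calc ⟪gradient f (x + t • v), v⟫ - ⟪gradient f x, v⟫
        = ⟪gradient f (x + t • v) - gradient f x, v⟫ := (inner_sub_left _ _ _).symm
      _ ≤ ‖gradient f (x + t • v) - gradient f x‖ * ‖v‖ := real_inner_le_norm _ _
      _ ≤ L * (t * ‖v‖) * ‖v‖ := by gcongr
      _ = L * t * ‖v‖ ^ 2 := by ring
  have hmono : MonotoneOn ψ (Set.Ici 0) :=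
    monotoneOn_of_hasDerivWithinAt_nonneg (convex_Ici 0)
      (fun t _ => (hψ t).continuousAt.continuousWithinAt)
      (fun t _ => (hψ t).hasDerivWithinAt) hψ'_nonneg
  have h01 := hmono Set.self_mem_Ici (Set.mem_Ici.2 zero_le_one) zero_le_one
  simp only [ψ, zero_smul, one_smul, add_zero, zero_mul, one_mul, one_pow] at h01
  linarith

theorem apply_sub_inv_smul_gradient_le (hL : 0 < L) (hf : Differentiable ℝ f)
    (hlip : ∀ x y, ‖gradient f x - gradient f y‖ ≤ L * ‖x - y‖) (x : E) :
    f (x - L⁻¹ • gradient f x) ≤ f x - ‖gradient f x‖ ^ 2 / (2 * L) := by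
  have h := le_add_inner_gradient_add_sq_norm hf hlip x (-(L⁻¹ • gradient f x))
  rw [← sub_eq_add_neg, inner_neg_right, real_inner_smul_right, real_inner_self_eq_norm_sq,
    norm_neg, norm_smul, Real.norm_of_nonneg (inv_nonneg.2 hL.le)] at h
  convert h using 1
  field_simp
  ring

theorem pl_const_le_two_mul_lipschitz_const {fstar μ : ℝ} (hL : 0 < L)
    (hf : Differentiable ℝ f)
    (hlip : ∀ x y, ‖gradient f x - gradient f y‖ ≤ L * ‖x - y‖)
    (hbelow : ∀ x, fstar ≤ f x) (hPL : ∀ x, f x - fstar ≤ 1 / μ * ‖gradient f x‖ ^ 2)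
    {w : E} (hw : gradient f w ≠ 0) :
    μ ≤ 2 * L := by
  rcases le_or_gt μ 0 with hμ | hμ
  · linarith
  have hg : 0 < ‖gradient f w‖ ^ 2 := by positivity
  have hstep := apply_sub_inv_smul_gradient_le hL hf hlip w
  have hdecrease : ‖gradient f w‖ ^ 2 / (2 * L) ≤ ‖gradient f w‖ ^ 2 / μ := by
    linarith [hbelow (w - L⁻¹ • gradient f w), hPL w, one_div_mul_eq_div μ (‖gradient f w‖ ^ 2)]
  exact (div_le_div_iff_of_pos_left hg (by positivity) hμ).1 hdecrease

end Descent

theorem le_of_inner_le_neg_mul_sq_norm {E : Type*} [NormedAddCommGroup E]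
    [InnerProductSpace ℝ E] {p g : E} {θ a : ℝ} (hg : g ≠ 0)
    (hinner : ⟪p, g⟫ ≤ -θ * ‖g‖ ^ 2) (hnorm : ‖p‖ ≤ a * ‖g‖) :
    θ ≤ a := by
  have hg2 : 0 < ‖g‖ ^ 2 := by positivity
  refine le_of_mul_le_mul_right ?_ hg2
  calc θ * ‖g‖ ^ 2 ≤ -⟪p, g⟫ := by linarith
    _ ≤ ‖p‖ * ‖g‖ := (neg_le_abs _).trans (abs_real_inner_le_norm p g)
    _ ≤ a * ‖g‖ * ‖g‖ := by gcongr
    _ = a * ‖g‖ ^ 2 := by ring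

theorem contraction_factor_mem_Ico {ρ θ μ c : ℝ} (hρ : ρ ∈ Set.Ioo (0 : ℝ) 1) (hθ : 0 < θ)
    (hμ : 0 < μ) (hc : 0 < c) (hθμ : θ ^ 2 * μ ≤ 2 * c) :
    0 ≤ 1 - 2 * (1 - ρ) * θ / c * ρ * μ * θ ∧ 1 - 2 * (1 - ρ) * θ / c * ρ * μ * θ < 1 := by
  obtain ⟨hρ0, hρ1⟩ := hρ
  have hfactor : 2 * (1 - ρ) * θ / c * ρ * μ * θ = 2 * (ρ * (1 - ρ)) * (θ ^ 2 * μ / c) := by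
    ring
  have hρρ : ρ * (1 - ρ) ≤ 1 / 4 := by nlinarith [sq_nonneg (2 * ρ - 1)]
  have hq : θ ^ 2 * μ / c ≤ 2 := (div_le_iff₀ hc).2 (by linarith)
  have hpos : 0 < 2 * (ρ * (1 - ρ)) * (θ ^ 2 * μ / c) := by
    have : 0 < 1 - ρ := by linarith
    positivity
  rw [hfactor]
  constructor
  · nlinarith [mul_le_mul hρρ hq (by positivity) (by norm_num)]
  · linarith

/-- contraction factor bound: if `f` has `L`-Lipschitz gradient, is
bounded below by `f*`, satisfies the PL inequality with constant `μ > 0`, and at every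
point with nonzero gradient there exists a direction `p` with `⟪p, g⟫ ≤ -θ‖g‖²` and
`‖p‖ ≤ a‖g‖`, then `θ ≤ √(2La²/μ)`, and for `τ = 2(1-ρ)θ/(La²)` with `ρ ∈ (0,1)` one
has `0 ≤ 1 - τρμθ < 1`. -/
theorem contraction_factor_bound
    {d : ℕ} (f : EuclideanSpace ℝ (Fin d) → ℝ) (L fstar μ θ a ρ : ℝ)
    (hL : 0 < L) (hμ : 0 < μ) (hθ : 0 < θ) (ha : 0 < a) (hρ : ρ ∈ Set.Ioo (0 : ℝ) 1)
    (hdiff : Differentiable ℝ f)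
    (hlip : ∀ x y : EuclideanSpace ℝ (Fin d),
      ‖gradient f x - gradient f y‖ ≤ L * ‖x - y‖)
    (hbelow : ∀ x, fstar ≤ f x)
    (hPL : ∀ x : EuclideanSpace ℝ (Fin d), f x - fstar ≤ 1 / μ * ‖gradient f x‖ ^ 2)
    (hdir : ∀ w : EuclideanSpace ℝ (Fin d), gradient f w ≠ 0 →
      ∃ p : EuclideanSpace ℝ (Fin d),
        ⟪p, gradient f w⟫ ≤ -θ * ‖gradient f w‖ ^ 2 ∧ ‖p‖ ≤ a * ‖gradient f w‖)
    (hex : ∃ w : EuclideanSpace ℝ (Fin d), gradient f w ≠ 0) :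
    θ ≤ Real.sqrt (2 * L * a ^ 2 / μ)
    ∧ 0 ≤ 1 - 2 * (1 - ρ) * θ / (L * a ^ 2) * ρ * μ * θ
    ∧ 1 - 2 * (1 - ρ) * θ / (L * a ^ 2) * ρ * μ * θ < 1 := by
  obtain ⟨w, hw⟩ := hex
  obtain ⟨p, hp_inner, hp_norm⟩ := hdir w hw
  have hθa : θ ≤ a := le_of_inner_le_neg_mul_sq_norm hw hp_inner hp_norm
  have hμL : μ ≤ 2 * L := pl_const_le_two_mul_lipschitz_const hL hdiff hlip hbelow hPL hw
  have hθμ : θ ^ 2 * μ ≤ 2 * (L * a ^ 2) :=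
    calc θ ^ 2 * μ ≤ a ^ 2 * (2 * L) := by gcongr
      _ = 2 * (L * a ^ 2) := by ring
  refine ⟨?_, contraction_factor_mem_Ico hρ hθ hμ (by positivity) hθμ⟩
  rw [Real.le_sqrt' hθ, le_div_iff₀ hμ]
  linarith
end

section
/- If the conjugate gradient method is applied to the symmetric positive definite system A v = g with initial iterate v_0 = 0 and g != 0, then every CG iterate v_k with k >= 1 satisfies <v_k, g> > 0. -/
open Matrix
open scoped RealInnerProductSpace

/-! The minimiser `v` of the energy error `⟪A (u - s), u - s⟫` over the Krylov space `K` satisfies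
Galerkin orthogonality `⟪A (v - s), u⟫ = 0` for `u ∈ K`. Taking `u = v` gives
`⟪v, g⟫ = ⟪A v, v⟫`, which is positive once `v ≠ 0`; and `v = 0` is impossible, since `u = g ∈ K`
would give `‖g‖² = ⟪A s, g⟫ = 0`. -/

theorem eq_zero_of_forall_nonneg_mul_sq_add_mul {a b : ℝ} (h : ∀ t : ℝ, 0 ≤ a * (t * t) + b * t) :
    b = 0 := by
  have hdisc := discrim_le_zero (K := ℝ) (a := a) (b := b) (c := 0) (by simpa using h)
  rw [discrim] at hdisc
  nlinarith [sq_nonneg b]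

theorem LinearMap.IsSymmetric.inner_map_sub_eq_zero_of_isMinOn
    {E : Type*} [NormedAddCommGroup E] [InnerProductSpace ℝ E] {T : E →ₗ[ℝ] E}
    (hT : T.IsSymmetric) {K : Submodule ℝ E} {s v : E} (hv : v ∈ K)
    (hmin : IsMinOn (fun u ↦ ⟪T (u - s), u - s⟫) K v) : ∀ u ∈ K, ⟪T (v - s), u⟫ = 0 := by
  intro u hu
  suffices 2 * ⟪T (v - s), u⟫ = 0 by simpa using this
  refine eq_zero_of_forall_nonneg_mul_sq_add_mul (a := ⟪T u, u⟫) fun t ↦ ?_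
  have hle := isMinOn_iff.mp hmin (v + t • u) (K.add_mem hv (K.smul_mem t hu))
  have hexpand : ⟪T (v + t • u - s), v + t • u - s⟫ =
      ⟪T (v - s), v - s⟫ + 2 * t * ⟪T (v - s), u⟫ + t * t * ⟪T u, u⟫ := by
    have hcross : ⟪T u, v - s⟫ = ⟪T (v - s), u⟫ := by rw [hT, real_inner_comm]
    rw [show v + t • u - s = (v - s) + t • u by abel, map_add, map_smul, inner_add_left,
      inner_add_right, inner_add_right, real_inner_smul_left, real_inner_smul_right,
      real_inner_smul_right, real_inner_smul_left, hcross]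
    ring
  linarith

theorem Matrix.PosDef.inner_toEuclideanLin_self_pos {n : Type*} [Fintype n] [DecidableEq n]
    {A : Matrix n n ℝ} (hA : A.PosDef) {x : EuclideanSpace ℝ n} (hx : x ≠ 0) :
    0 < ⟪A.toEuclideanLin x, x⟫ := by
  simpa [EuclideanSpace.inner_eq_star_dotProduct, Matrix.ofLp_toLpLin, Matrix.toLin'_apply]
    using hA.dotProduct_mulVec_pos (x := WithLp.ofLp x) (by simpa using hx)

/-- If CG is applied to the SPD system `A v = g` with `v₀ = 0` and
`g ≠ 0`, then every CG iterate `v_k`, `k ≥ 1`, satisfies `⟪v_k, g⟫ > 0`. Here the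
`k`-th CG iterate is characterized as the minimizer of the `A`-norm of the error
`v - s` (where `A s = g`) over the Krylov subspace `span {g, Ag, …, A^{k-1} g}`. -/
theorem cg_iterate_inner_product_positive
    {d : ℕ} (A : Matrix (Fin d) (Fin d) ℝ) (hA : A.PosDef)
    (g s : EuclideanSpace ℝ (Fin d)) (hg : g ≠ 0)
    (hs : A.toEuclideanLin s = g)
    (k : ℕ) (hk : 1 ≤ k) (v : EuclideanSpace ℝ (Fin d))
    (hmem : v ∈ Submodule.span ℝ
      {x : EuclideanSpace ℝ (Fin d) | ∃ j < k, x = ((A.toEuclideanLin : Module.End ℝ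
        (EuclideanSpace ℝ (Fin d))) ^ j) g})
    (hmin : ∀ u ∈ Submodule.span ℝ
      {x : EuclideanSpace ℝ (Fin d) | ∃ j < k, x = ((A.toEuclideanLin : Module.End ℝ
        (EuclideanSpace ℝ (Fin d))) ^ j) g},
      ⟪A.toEuclideanLin (v - s), v - s⟫ ≤ ⟪A.toEuclideanLin (u - s), u - s⟫) :
    0 < ⟪v, g⟫ := by
  have hsymm : A.toEuclideanLin.IsSymmetric := isSymmetric_toEuclideanLin_iff.mpr hA.isHermitian
  have horth := hsymm.inner_map_sub_eq_zero_of_isMinOn hmem (isMinOn_iff.mpr hmin)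
  have hv : v ≠ 0 := by
    rintro rfl
    have hgg := horth g (Submodule.subset_span ⟨0, hk, by simp⟩)
    simp [hs, hg] at hgg
  have henergy : ⟪A.toEuclideanLin v, v⟫ = ⟪v, g⟫ := by
    have hvv := horth v hmem
    rw [map_sub, inner_sub_left, sub_eq_zero, hs, real_inner_comm v g] at hvv
    exact hvv
  exact henergy ▸ hA.inner_toEuclideanLin_self_pos hv
end
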